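/- arXiv:1802.06289 — 2 statements merged into one kernel-verified Lean document; each statement's English description precedes it below -/
import Mathlib

section
/- Let A ∈ ℤ^{m×n} be an integer matrix with all entries of absolute value at most Δ, and let y ∈ ℤ^n be a nonzero cycle of A with ‖y‖₁ > (2mΔ + 1)^m. Then y can be written as the sum of two nonzero cycles of A, each of which is sign-compatible with y. -/
/-- Two integer vectors are sign-compatible if they agree in sign componentwise. -/
def SignCompat {ι : Type*} (u v : ι → ℤ) : Prop := ∀ i, 0 ≤ u i * v i

/-- A cycle of an integer matrix `A` is an integer vector in its kernel. -/
def IsCycle {R C : Type*} [Fintype C] (A : Matrix R C ℤ) (y : C → ℤ) : Prop :=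
  A.mulVec y = 0

/-!
Write `y` as a sum of `‖y‖₁` signed unit vectors, each sign-compatible with `y`. Their images
under `A` are columns of `±A`, so they have sup-norm at most `Δ`, and they sum to `A y = 0`.
By the Steinitz lemma they can be ordered so that every partial sum lies in the box
`[-mΔ, mΔ]^m`, which has `(2mΔ+1)^m` points. There are more proper prefixes than that, so two
prefix sums coincide, and the unit vectors between them add up to a cycle `u`; the remaining
ones add up to the cycle `y - u`.

For the Steinitz lemma we follow Grinberg and Sevastyanov: give every vector the weight
`(N - m) / N` and repeatedly discard a vector. After rescaling the weights, a vertex of the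
polytope of admissible weights has at most `m + 1` fractional coordinates, which forces some
weight to vanish. For a set carrying weights `λ`, the sum of its vectors is `∑ (1 - λₜ) vₜ`
with `∑ (1 - λₜ) = m`, hence has norm at most `mΔ`.
-/

open Finset Module Matrix

section Weights

variable {K ι E : Type*} [Field K] [AddCommGroup E] [Module K E]

lemma exists_affine_relation [DecidableEq ι] [Module.Finite K E] (v : ι → E) {F : Finset ι}
    (hF : finrank K E + 1 < #F) :
    ∃ w : ι → K, (∀ t ∉ F, w t = 0) ∧ ∑ t ∈ F, w t = 0 ∧ ∑ t ∈ F, w t • v t = 0 ∧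
      ∃ t ∈ F, w t ≠ 0 := by
  have hdep : ¬ LinearIndependent K (fun t : F => (v t, (1 : K))) := fun hli => by
    have := hli.fintype_card_le_finrank
    simp only [Fintype.card_coe, finrank_prod, finrank_self] at this
    omega
  obtain ⟨g, hg, t, hgt⟩ := Fintype.not_linearIndependent_iff.mp hdep
  set w : ι → K := fun t => if h : t ∈ F then g ⟨t, h⟩ else 0
  have hw : ∀ t : F, w t = g t := fun t => dif_pos t.2
  refine ⟨w, fun t ht => dif_neg ht, ?_, ?_, t, t.2, by rwa [hw]⟩
  · simpa [← sum_coe_sort F, hw, Prod.snd_sum] using congrArg Prod.snd hg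
  · simpa [← sum_coe_sort F, hw, Prod.fst_sum] using congrArg Prod.fst hg

variable [LinearOrder K] [IsStrictOrderedRing K]

/-- How far one can move from `a ∈ [0, 1]` in direction `b` before leaving `[0, 1]`. -/
def exitTime (a b : K) : K := (if 0 < b then 1 - a else a) / |b|

lemma exitTime_pos {a b : K} (ha : a ∈ Set.Ioo 0 1) (hb : b ≠ 0) : 0 < exitTime a b := by
  obtain ⟨ha₀, ha₁⟩ := ha
  unfold exitTime
  split_ifs <;> exact div_pos (by linarith) (abs_pos.mpr hb)

lemma add_mul_mem_Icc_of_le_exitTime {a b θ : K} (ha : a ∈ Set.Icc 0 1) (hθ : 0 ≤ θ)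
    (hθb : θ ≤ exitTime a b) : a + θ * b ∈ Set.Icc 0 1 := by
  obtain ⟨ha₀, ha₁⟩ := ha
  unfold exitTime at hθb
  rcases lt_trichotomy b 0 with hb | rfl | hb
  · rw [if_neg hb.not_gt, abs_of_neg hb, le_div_iff₀ (neg_pos.mpr hb)] at hθb
    constructor <;> nlinarith
  · simp [ha₀, ha₁]
  · rw [if_pos hb, abs_of_pos hb, le_div_iff₀ hb] at hθb
    constructor <;> nlinarith

lemma add_exitTime_mul_notMem_Ioo {a b : K} (hb : b ≠ 0) :
    a + exitTime a b * b ∉ Set.Ioo 0 1 := by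
  unfold exitTime
  rcases hb.lt_or_gt with hb | hb
  · rw [if_neg hb.not_gt, abs_of_neg hb, div_neg, neg_mul, div_mul_cancel₀ _ hb.ne]
    simp
  · rw [if_pos hb, abs_of_pos hb, div_mul_cancel₀ _ hb.ne']
    simp

lemma exists_add_mul_mem_Icc_notMem_Ioo {F : Finset ι} {c w : ι → K}
    (hc : ∀ t ∈ F, c t ∈ Set.Ioo 0 1) (hw : ∃ t ∈ F, w t ≠ 0) :
    ∃ θ : K, (∀ t ∈ F, c t + θ * w t ∈ Set.Icc 0 1) ∧
      ∃ t₀ ∈ F, c t₀ + θ * w t₀ ∉ Set.Ioo 0 1 := by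
  obtain ⟨t₁, ht₁, hwt₁⟩ := hw
  obtain ⟨t₀, ht₀, hmin⟩ := exists_min_image {t ∈ F | w t ≠ 0}
    (fun t => exitTime (c t) (w t)) ⟨t₁, mem_filter.mpr ⟨ht₁, hwt₁⟩⟩
  rw [mem_filter] at ht₀
  refine ⟨exitTime (c t₀) (w t₀), fun t ht => ?_, t₀, ht₀.1, add_exitTime_mul_notMem_Ioo ht₀.2⟩
  by_cases hwt : w t = 0
  · simpa [hwt] using Set.Ioo_subset_Icc_self (hc t ht)
  · exact add_mul_mem_Icc_of_le_exitTime (Set.Ioo_subset_Icc_self (hc t ht))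
      (exitTime_pos (hc t₀ ht₀.1) ht₀.2).le (hmin t (mem_filter.mpr ⟨ht, hwt⟩))

lemma exists_eq_zero_of_card_fractional_le {S : Finset ι} {c : ι → K} {m : ℕ}
    (hc : ∀ t ∈ S, c t ∈ Set.Icc 0 1) (hfrac : #{t ∈ S | c t ∈ Set.Ioo 0 1} ≤ m + 1)
    (hsum : ∑ t ∈ S, c t = #S - (m + 1)) : ∃ t ∈ S, c t = 0 := by
  by_contra! hne
  set F := {t ∈ S | c t ∈ Set.Ioo 0 1}
  have hone : ∀ t ∈ S, t ∉ F → c t = 1 := fun t ht htF => by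
    obtain ⟨h₀, h₁⟩ := hc t ht
    by_contra h
    exact htF (mem_filter.mpr ⟨ht, h₀.lt_of_ne' (hne t ht), h₁.lt_of_ne h⟩)
  have hgap : ∑ t ∈ F, (1 - c t) = m + 1 := by
    rw [sum_subset (filter_subset _ _) fun t ht htF => by rw [hone t ht htF, sub_self]]
    simp [sum_sub_distrib, hsum]
  rcases F.eq_empty_or_nonempty with hF | hF
  · rw [hF, sum_empty] at hgap
    linarith [(Nat.cast_nonneg m : (0 : K) ≤ m)]
  · have : ∑ t ∈ F, (1 - c t) < ∑ t ∈ F, 1 :=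
      sum_lt_sum_of_nonempty hF fun t ht => by linarith [(mem_filter.mp ht).2.1]
    rw [hgap, sum_const, nsmul_one] at this
    exact this.not_ge (by exact_mod_cast hfrac)

variable (K) in
/-- The weights of Grinberg and Sevastyanov's proof of the Steinitz lemma. -/
def HasBalancedWeights (v : ι → E) (S : Finset ι) : Prop :=
  ∃ c : ι → K, (∀ t ∈ S, c t ∈ Set.Icc 0 1) ∧ ∑ t ∈ S, c t = #S - finrank K E ∧
    ∑ t ∈ S, c t • v t = 0

variable [DecidableEq ι] [Module.Finite K E]

lemma exists_weights_card_fractional_lt (v : ι → E) {S : Finset ι} {c : ι → K}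
    (hc : ∀ t ∈ S, c t ∈ Set.Icc 0 1)
    (hfrac : finrank K E + 1 < #{t ∈ S | c t ∈ Set.Ioo 0 1}) :
    ∃ c' : ι → K, (∀ t ∈ S, c' t ∈ Set.Icc 0 1) ∧ ∑ t ∈ S, c' t = ∑ t ∈ S, c t ∧
      ∑ t ∈ S, c' t • v t = ∑ t ∈ S, c t • v t ∧
      #{t ∈ S | c' t ∈ Set.Ioo 0 1} < #{t ∈ S | c t ∈ Set.Ioo 0 1} := by
  set F := {t ∈ S | c t ∈ Set.Ioo 0 1}
  obtain ⟨w, hwF, hw_sum, hwv_sum, hw⟩ := exists_affine_relation v hfrac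
  obtain ⟨θ, hθ, t₀, ht₀F, ht₀⟩ :=
    exists_add_mul_mem_Icc_notMem_Ioo (fun t ht => (mem_filter.mp ht).2) hw
  have hw_sum_S : ∑ t ∈ S, w t = 0 :=
    (sum_subset (filter_subset _ _) fun t _ ht => hwF t ht).symm.trans hw_sum
  have hwv_sum_S : ∑ t ∈ S, w t • v t = 0 :=
    (sum_subset (filter_subset _ _) fun t _ ht => by rw [hwF t ht, zero_smul]).symm.trans hwv_sum
  have hc' : ∀ t ∈ S, t ∉ F → c t + θ * w t = c t := fun t _ ht => by simp [hwF t ht]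
  refine ⟨fun t => c t + θ * w t, fun t ht => ?_, ?_, ?_, ?_⟩
  · by_cases htF : t ∈ F
    · exact hθ t htF
    · simpa only [hc' t ht htF] using hc t ht
  · simp [sum_add_distrib, ← mul_sum, hw_sum_S]
  · simp [add_smul, mul_smul, sum_add_distrib, ← smul_sum, hwv_sum_S]
  · refine (card_le_card fun t ht => ?_).trans_lt (card_erase_lt_of_mem ht₀F)
    obtain ⟨htS, ht⟩ := mem_filter.mp ht
    have htF : t ∈ F := by
      by_contra htF
      exact htF (mem_filter.mpr ⟨htS, hc' t htS htF ▸ ht⟩)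
    exact mem_erase.mpr ⟨fun h => ht₀ (h ▸ ht), htF⟩

lemma exists_weights_card_fractional_le (v : ι → E) (S : Finset ι) (c : ι → K)
    (hc : ∀ t ∈ S, c t ∈ Set.Icc 0 1) :
    ∃ c' : ι → K, (∀ t ∈ S, c' t ∈ Set.Icc 0 1) ∧ ∑ t ∈ S, c' t = ∑ t ∈ S, c t ∧
      ∑ t ∈ S, c' t • v t = ∑ t ∈ S, c t • v t ∧
      #{t ∈ S | c' t ∈ Set.Ioo 0 1} ≤ finrank K E + 1 := by
  induction h : #{t ∈ S | c t ∈ Set.Ioo 0 1} using Nat.strong_induction_on generalizing c with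
  | _ k ih =>
    by_cases hk : k ≤ finrank K E + 1
    · exact ⟨c, hc, rfl, rfl, h ▸ hk⟩
    obtain ⟨c₁, hc₁, hsum₁, hsumv₁, hlt⟩ :=
      exists_weights_card_fractional_lt v hc (h ▸ not_le.mp hk)
    obtain ⟨c₂, hc₂, hsum₂, hsumv₂, hfrac₂⟩ := ih _ (h ▸ hlt) c₁ hc₁ rfl
    exact ⟨c₂, hc₂, hsum₂.trans hsum₁, hsumv₂.trans hsumv₁, hfrac₂⟩

lemma HasBalancedWeights.exists_erase {v : ι → E} {S : Finset ι}
    (hS : HasBalancedWeights K v S) (hcard : finrank K E < #S) :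
    ∃ t ∈ S, HasBalancedWeights K v (S.erase t) := by
  obtain ⟨c, hc, hsum, hsumv⟩ := hS
  set m := finrank K E
  have hgap : (1 : K) ≤ #S - m := by
    rw [le_sub_iff_add_le']; exact_mod_cast hcard
  set s : K := (#S - m - 1) / (#S - m)
  have hs₀ : 0 ≤ s := div_nonneg (by linarith) (by linarith)
  have hs₁ : s ≤ 1 := (div_le_one (by linarith)).mpr (by linarith)
  obtain ⟨c', hc', hsum', hsumv', hfrac⟩ := exists_weights_card_fractional_le v S (s * c ·)
    fun t ht => ⟨mul_nonneg hs₀ (hc t ht).1, mul_le_one₀ hs₁ (hc t ht).1 (hc t ht).2⟩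
  have hsum'' : ∑ t ∈ S, c' t = #S - (m + 1) := by
    rw [hsum', ← mul_sum, hsum, div_mul_cancel₀ _ (by linarith)]; ring
  have hsumv'' : ∑ t ∈ S, c' t • v t = 0 := by
    simp [hsumv', mul_smul, ← smul_sum, hsumv]
  obtain ⟨t₀, ht₀, hzero⟩ := exists_eq_zero_of_card_fractional_le hc' hfrac hsum''
  refine ⟨t₀, ht₀, c', fun t ht => hc' t (mem_of_mem_erase ht), ?_, ?_⟩
  · rw [sum_erase _ hzero, hsum'', card_erase_of_mem ht₀, Nat.cast_sub (card_pos.mpr ⟨t₀, ht₀⟩)]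
    push_cast; ring
  · rw [sum_erase _ (by rw [hzero, zero_smul]), hsumv'']

end Weights

lemma exists_chain_of_exists_erase {ι : Type*} [DecidableEq ι] (P : Finset ι → Prop)
    (hP : ∀ S, P S → S.Nonempty → ∃ t ∈ S, P (S.erase t)) (S : Finset ι) (hS : P S) :
    ∃ C : ℕ → Finset ι, Monotone C ∧ (∀ j, C j ⊆ S) ∧ (∀ j ≤ #S, #(C j) = j) ∧ ∀ j, P (C j) := by
  induction h : #S generalizing S with
  | zero => exact ⟨fun _ => S, monotone_const, fun _ => subset_rfl,
      fun j hj => h.trans (Nat.le_zero.mp hj).symm, fun _ => hS⟩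
  | succ k ih =>
    obtain ⟨t, ht, hPt⟩ := hP S hS (card_pos.mp (by omega))
    obtain ⟨C, hmono, hsub, hcard, hPC⟩ :=
      ih (S.erase t) hPt (by rw [card_erase_of_mem ht, h]; rfl)
    refine ⟨fun j => if j ≤ k then C j else S, monotone_nat_of_le_succ fun j => ?_,
      fun j => ?_, fun j hj => ?_, fun j => ?_⟩
    · split_ifs
      · exact hmono j.le_succ
      · exact (hsub j).trans (erase_subset t S)
      · omega
      · exact subset_rfl
    · dsimp only
      split_ifs
      exacts [(hsub j).trans (erase_subset t S), subset_rfl]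
    · dsimp only
      split_ifs with hjk
      exacts [hcard j hjk, by omega]
    · dsimp only
      split_ifs
      exacts [hPC j, hS]

section Steinitz

variable {ι E : Type*} [NormedAddCommGroup E] [NormedSpace ℝ E] {v : ι → E} {Δ : ℝ}

lemma HasBalancedWeights.norm_sum_le_finrank_mul {S : Finset ι} (hS : HasBalancedWeights ℝ v S)
    (hv : ∀ t ∈ S, ‖v t‖ ≤ Δ) : ‖∑ t ∈ S, v t‖ ≤ finrank ℝ E * Δ := by
  obtain ⟨c, hc, hsum, hsumv⟩ := hS
  have hc₁ : ∀ t ∈ S, 0 ≤ 1 - c t := fun t ht => sub_nonneg.mpr (hc t ht).2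
  calc ‖∑ t ∈ S, v t‖ = ‖∑ t ∈ S, (1 - c t) • v t‖ := by
        simp [sub_smul, sum_sub_distrib, hsumv]
    _ ≤ ∑ t ∈ S, ‖(1 - c t) • v t‖ := norm_sum_le _ _
    _ ≤ ∑ t ∈ S, (1 - c t) * Δ := sum_le_sum fun t ht => by
        rw [norm_smul, Real.norm_of_nonneg (hc₁ t ht)]
        exact mul_le_mul_of_nonneg_left (hv t ht) (hc₁ t ht)
    _ = finrank ℝ E * Δ := by
        rw [← sum_mul, sum_sub_distrib, hsum]; simp

/-- **Steinitz lemma** (Grinberg–Sevastyanov); the ordering is encoded by the chain of its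
prefix sets. -/
theorem exists_chain_norm_sum_le [FiniteDimensional ℝ E] [Fintype ι] [DecidableEq ι]
    (hΔ : 0 ≤ Δ) (hv : ∀ t, ‖v t‖ ≤ Δ) (hsum : ∑ t, v t = 0) :
    ∃ C : ℕ → Finset ι, Monotone C ∧ (∀ j ≤ Fintype.card ι, #(C j) = j) ∧
      ∀ j, ‖∑ t ∈ C j, v t‖ ≤ finrank ℝ E * Δ := by
  set m := finrank ℝ E
  let P : Finset ι → Prop := fun S => #S ≤ m ∨ HasBalancedWeights ℝ v S
  have hP : ∀ S, P S → S.Nonempty → ∃ t ∈ S, P (S.erase t) := by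
    rintro S hS ⟨t, ht⟩
    by_cases hcard : #S ≤ m
    · exact ⟨t, ht, Or.inl (card_erase_le.trans hcard)⟩
    · obtain ⟨t', ht', h⟩ := (hS.resolve_left hcard).exists_erase (not_le.mp hcard)
      exact ⟨t', ht', Or.inr h⟩
  have huniv : P univ := by
    set N := #(univ : Finset ι)
    by_cases hN : N ≤ m
    · exact Or.inl hN
    have hN₀ : (0 : ℝ) < N := by exact_mod_cast (Nat.zero_le m).trans_lt (not_le.mp hN)
    refine Or.inr ⟨fun _ => ((N : ℝ) - m) / N, fun t _ => ⟨?_, ?_⟩, ?_, ?_⟩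
    · exact div_nonneg (sub_nonneg.mpr (by exact_mod_cast (not_le.mp hN).le)) hN₀.le
    · exact div_le_one_of_le₀ (sub_le_self _ m.cast_nonneg) hN₀.le
    · rw [sum_const, nsmul_eq_mul, mul_div_cancel₀ _ hN₀.ne']
    · rw [← smul_sum, hsum, smul_zero]
  obtain ⟨C, hmono, -, hcard, hPC⟩ := exists_chain_of_exists_erase P hP univ huniv
  refine ⟨C, hmono, fun j hj => hcard j (by rwa [card_univ]), fun j => ?_⟩
  rcases hPC j with hC | hC
  · calc ‖∑ t ∈ C j, v t‖ ≤ #(C j) • Δ :=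
          (norm_sum_le _ _).trans (sum_le_card_nsmul _ _ _ fun t _ => hv t)
      _ ≤ m * Δ := by rw [nsmul_eq_mul]; gcongr
  · exact hC.norm_sum_le_finrank_mul fun t _ => hv t

end Steinitz

lemma card_Icc_neg_const_const {κ : Type*} [Fintype κ] [DecidableEq κ] {B : ℤ} (hB : 0 ≤ B) :
    (#(Icc (fun _ : κ => -B) (fun _ => B)) : ℤ) = (2 * B + 1) ^ Fintype.card κ := by
  rw [Pi.card_Icc, prod_const, Int.card_Icc, card_univ]
  push_cast
  rw [Int.toNat_of_nonneg (by omega)]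
  ring

theorem exists_sum_eq_zero_of_card_lt {ι : Type*} [Fintype ι] [DecidableEq ι] {m : ℕ}
    (w : ι → Fin m → ℤ) {Δ : ℤ} (hΔ : 0 ≤ Δ) (hw : ∀ t i, |w t i| ≤ Δ) (hsum : ∑ t, w t = 0)
    (hcard : (2 * m * Δ + 1) ^ m < Fintype.card ι) :
    ∃ T : Finset ι, T.Nonempty ∧ Tᶜ.Nonempty ∧ ∑ t ∈ T, w t = 0 := by
  have hΔℝ : (0 : ℝ) ≤ Δ := by exact_mod_cast hΔ
  obtain ⟨C, hmono, hcardC, hC⟩ := exists_chain_norm_sum_le (v := fun t i => (w t i : ℝ)) hΔℝ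
    (fun t => (pi_norm_le_iff_of_nonneg hΔℝ).mpr fun i => by
      simpa [← Int.cast_abs] using hw t i)
    (by ext i; simpa using congrArg (fun x : ℤ => (x : ℝ)) (congrFun hsum i))
  have hbox : ∀ j, ∑ t ∈ C j, w t ∈ Icc (fun _ => -(m * Δ)) (fun _ => (m : ℤ) * Δ) := by
    intro j
    simp only [mem_Icc, Pi.le_def, ← forall_and, ← abs_le]
    intro i
    have := (norm_le_pi_norm _ i).trans (hC j)
    simp only [finrank_fin_fun, Finset.sum_apply, Real.norm_eq_abs] at this
    rw [Finset.sum_apply]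
    exact_mod_cast this
  obtain ⟨a, ha, b, hb, hab, heq⟩ := exists_ne_map_eq_of_card_lt_of_maps_to
    (s := range (Fintype.card ι)) (f := fun j => ∑ t ∈ C j, w t)
    (by
      rw [card_range, ← Nat.cast_lt (α := ℤ), card_Icc_neg_const_const (by positivity),
        Fintype.card_fin, ← mul_assoc]
      exact hcard)
    fun j _ => hbox j
  wlog hlt : a < b generalizing a b
  · exact this b hb a ha hab.symm heq.symm (hab.symm.lt_of_le (not_lt.mp hlt))
  rw [mem_range] at ha hb
  have hcard_sdiff : #(C b \ C a) = b - a := by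
    rw [card_sdiff_of_subset (hmono hlt.le), hcardC b hb.le, hcardC a ha.le]
  refine ⟨C b \ C a, card_pos.mp (by omega), ?_, ?_⟩
  · rw [← card_pos, card_compl]
    omega
  · rw [sum_sdiff_eq_sub (hmono hlt.le)]
    exact sub_eq_zero.mpr heq.symm

section UnitDecomposition

variable {κ : Type*} (y : κ → ℤ)

lemma card_unitDecomposition_index [Fintype κ] :
    (Fintype.card (Σ j, Fin (y j).natAbs) : ℤ) = ∑ j, |y j| := by
  simp [Fintype.card_sigma]

variable [DecidableEq κ]

def unitDecomposition (t : Σ j, Fin (y j).natAbs) : κ → ℤ := Pi.single t.1 (y t.1).sign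

lemma signCompat_sum_unitDecomposition (T : Finset (Σ j, Fin (y j).natAbs)) :
    SignCompat (∑ t ∈ T, unitDecomposition y t) y := fun i => by
  rw [Finset.sum_apply, sum_mul]
  refine sum_nonneg fun t _ => ?_
  rw [unitDecomposition, Pi.single_apply]
  split_ifs with h
  · rw [← h, Int.sign_mul_self_eq_abs]
    exact abs_nonneg _
  · rw [zero_mul]

variable [Fintype κ]

lemma sum_unitDecomposition : ∑ t, unitDecomposition y t = y := by
  conv_rhs => rw [← univ_sum_single y]
  rw [Fintype.sum_sigma]
  refine sum_congr rfl fun j _ => ?_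
  simp only [unitDecomposition, sum_const, card_univ, Fintype.card_fin, ← Pi.single_smul,
    nsmul_eq_mul, mul_comm, Int.sign_mul_natAbs]

lemma unitDecomposition_dotProduct_pos (t : Σ j, Fin (y j).natAbs) :
    0 < unitDecomposition y t ⬝ᵥ y := by
  rw [unitDecomposition, single_dotProduct, Int.sign_mul_self_eq_abs, abs_pos,
    ← Int.natAbs_pos]
  exact Fin.pos t.2

lemma sum_unitDecomposition_ne_zero {T : Finset (Σ j, Fin (y j).natAbs)} (hT : T.Nonempty) :
    ∑ t ∈ T, unitDecomposition y t ≠ 0 := fun h => by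
  have := congrArg (· ⬝ᵥ y) h
  simp only [sum_dotProduct, zero_dotProduct] at this
  exact (sum_pos (fun t _ => unitDecomposition_dotProduct_pos y t) hT).ne' this

lemma abs_mulVec_unitDecomposition_apply {ρ : Type*} (A : Matrix ρ κ ℤ)
    (t : Σ j, Fin (y j).natAbs) (i : ρ) : |(A *ᵥ unitDecomposition y t) i| = |A i t.1| := by
  rw [unitDecomposition, mulVec_single]
  simp only [Pi.smul_apply, col_apply, op_smul_eq_mul, abs_mul,
    Int.abs_sign_of_ne_zero (Int.natAbs_pos.mp (Fin.pos t.2)), mul_one]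

end UnitDecomposition

/-- A nonzero cycle `y` of `A ∈ ℤ^{m×n}`, with all entries of `A` of absolute
value at most `Δ`, whose `ℓ₁`-norm exceeds `(2mΔ+1)^m` decomposes as the sum of
two nonzero cycles of `A`, each sign-compatible with `y`. -/
theorem long_cycle_decomposes (m n : ℕ) (A : Matrix (Fin m) (Fin n) ℤ) (Δ : ℤ)
    (hA : ∀ i j, |A i j| ≤ Δ)
    (y : Fin n → ℤ) (hcyc : IsCycle A y) (hne : y ≠ 0)
    (hlong : (2 * (m : ℤ) * Δ + 1) ^ m < ∑ i, |y i|) :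
    ∃ u v : Fin n → ℤ, IsCycle A u ∧ IsCycle A v ∧ u ≠ 0 ∧ v ≠ 0 ∧
      SignCompat u y ∧ SignCompat v y ∧ y = u + v := by
  obtain ⟨j₀, -⟩ := Function.ne_iff.mp hne
  obtain ⟨Δ', hΔ', hA', hlong'⟩ : ∃ Δ' : ℤ, 0 ≤ Δ' ∧ (∀ i j, |A i j| ≤ Δ') ∧
      (2 * (m : ℤ) * Δ' + 1) ^ m < ∑ i, |y i| := by
    rcases Nat.eq_zero_or_pos m with rfl | hm
    · exact ⟨0, le_rfl, fun i => i.elim0, by simpa using hlong⟩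
    · exact ⟨Δ, (abs_nonneg _).trans (hA ⟨0, hm⟩ j₀), hA, hlong⟩
  set s := unitDecomposition y
  have hcycle : ∀ T, IsCycle A (∑ t ∈ T, s t) ↔ ∑ t ∈ T, A *ᵥ s t = 0 := fun T => by
    rw [IsCycle, Matrix.mulVec_sum]
  have hsum : ∑ t, A *ᵥ s t = 0 := by
    rw [← Matrix.mulVec_sum, sum_unitDecomposition]
    exact hcyc
  obtain ⟨T, hT, hTc, hTsum⟩ := exists_sum_eq_zero_of_card_lt (fun t => A *ᵥ s t) hΔ'
    (fun t i => (abs_mulVec_unitDecomposition_apply y A t i).trans_le (hA' i _)) hsum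
    (by rwa [card_unitDecomposition_index])
  refine ⟨∑ t ∈ T, s t, ∑ t ∈ Tᶜ, s t, (hcycle T).mpr hTsum, (hcycle Tᶜ).mpr ?_,
    sum_unitDecomposition_ne_zero y hT, sum_unitDecomposition_ne_zero y hTc,
    signCompat_sum_unitDecomposition y T, signCompat_sum_unitDecomposition y Tᶜ, ?_⟩
  · rwa [← sum_compl_add_sum T, hTsum, add_zero] at hsum
  · rw [sum_add_sum_compl, sum_unitDecomposition]
end

section
/- Let A^(1) ∈ ℤ^{r×t_1}, …, A^(n) ∈ ℤ^{r×t_n} be matrices with all entries of absolute value at most Δ, and let B^(1) ∈ ℤ^{s_1×t_1}, …, B^(n) ∈ ℤ^{s_n×t_n} be integer matrices such that every element of the Graver basis of each B^(i) has ℓ₁-norm at most L. Let 𝒜 be the block matrix whose first r rows are the horizontal concatenation (A^(1) ⋯ A^(n)) and whose remaining rows form the block-diagonal matrix with blocks B^(1), …, B^(n). Then every element y of the Graver basis of 𝒜 satisfies ‖y‖₁ ≤ L · (2rΔL + 1)^r. -/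
/-- The Graver basis of `A` consists of the nonzero cycles of `A` that cannot be
written as the sum of two sign-compatible nonzero cycles of `A`. -/
def InGraverBasis {R C : Type*} [Fintype C] (A : Matrix R C ℤ) (y : C → ℤ) : Prop :=
  IsCycle A y ∧ y ≠ 0 ∧
    ¬ ∃ u v : C → ℤ, IsCycle A u ∧ IsCycle A v ∧ u ≠ 0 ∧ v ≠ 0 ∧
      SignCompat u v ∧ y = u + v

/-- The block matrix whose first `r` rows are the horizontal concatenation
`(A⁽¹⁾ ⋯ A⁽ⁿ⁾)` (with `A⁽ⁱ⁾ ∈ ℤ^{r × tᵢ}`) and whose remaining rows form the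
block-diagonal matrix with blocks `B⁽¹⁾, …, B⁽ⁿ⁾` (with `B⁽ⁱ⁾ ∈ ℤ^{sᵢ × tᵢ}`). -/
def blockNFoldMatrix {n r : ℕ} {t s : Fin n → ℕ}
    (A : ∀ i, Matrix (Fin r) (Fin (t i)) ℤ)
    (B : ∀ i, Matrix (Fin (s i)) (Fin (t i)) ℤ) :
    Matrix (Fin r ⊕ (Σ i, Fin (s i))) (Σ i, Fin (t i)) ℤ :=
  Matrix.of fun row col =>
    match row with
    | Sum.inl a => A col.1 a col.2
    | Sum.inr q => if h : q.1 = col.1 then B col.1 (h ▸ q.2) col.2 else 0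


lemma abs_add_of_sign (a b : ℤ) (h : 0 ≤ a * b) : |a + b| = |a| + |b| := by
  rcases le_or_gt 0 a with ha | ha <;> rcases le_or_gt 0 b with hb | hb
  · rw [abs_of_nonneg ha, abs_of_nonneg hb, abs_of_nonneg (by linarith)]
  · have : a = 0 := by nlinarith
    simp [this]
  · have : b = 0 := by nlinarith
    simp [this]
  · rw [abs_of_nonpos ha.le, abs_of_nonpos hb.le, abs_of_nonpos (by linarith)]; ring

lemma sign_of_abs_add (a b : ℤ) (h : |a + b| = |a| + |b|) : 0 ≤ a * b := by
  rcases le_or_gt 0 a with ha | ha <;> rcases le_or_gt 0 b with hb | hb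
  · positivity
  · rw [abs_of_nonneg ha, abs_of_nonpos hb.le] at h
    rcases abs_cases (a+b) with ⟨h1,_⟩|⟨h1,_⟩
    · have : b = 0 := by linarith
      simp [this]
    · have : a = 0 := by linarith
      simp [this]
  · rw [abs_of_nonpos ha.le, abs_of_nonneg hb] at h
    rcases abs_cases (a+b) with ⟨h1,_⟩|⟨h1,_⟩
    · have : a = 0 := by linarith
      simp [this]
    · have : b = 0 := by linarith
      simp [this]
  · nlinarith [mul_pos (neg_pos.2 ha) (neg_pos.2 hb)]

/-- ℓ₁ norm of a nonzero integer vector is ≥ 1. -/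
lemma one_le_l1 {C : Type*} [Fintype C] (y : C → ℤ) (hy : y ≠ 0) :
    1 ≤ ∑ c, |y c| := by
  obtain ⟨c, hc⟩ : ∃ c, y c ≠ 0 := by
    by_contra h; push_neg at h; exact hy (funext h)
  calc (1:ℤ) ≤ |y c| := Int.one_le_abs hc
  _ ≤ ∑ c, |y c| :=
    Finset.single_le_sum (fun c _ => abs_nonneg (y c)) (Finset.mem_univ c)

/-- Conformal decomposition of a nonzero cycle into Graver basis elements. -/
lemma conformal_decomp {R C : Type*} [Fintype C] (B : Matrix R C ℤ) :
    ∀ (m : ℕ) (y : C → ℤ), (∑ c, |y c|) ≤ (m : ℤ) → IsCycle B y → y ≠ 0 →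
    ∃ (N : ℕ) (g : Fin N → (C → ℤ)), 0 < N ∧
      (∀ k, InGraverBasis B (g k)) ∧
      (∀ c, ∑ k, g k c = y c) ∧ (∀ c, ∑ k, |g k c| = |y c|) := by
  intro m
  induction m with
  | zero =>
    intro y hm hcyc hne
    have := one_le_l1 y hne
    push_cast at hm
    linarith
  | succ m ih =>
    intro y hm hcyc hne
    by_cases hg : InGraverBasis B y
    · refine ⟨1, fun _ => y, one_pos, fun _ => hg, fun c => ?_, fun c => ?_⟩ <;> simp
    · have hex : ∃ u v : C → ℤ, IsCycle B u ∧ IsCycle B v ∧ u ≠ 0 ∧ v ≠ 0 ∧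
          SignCompat u v ∧ y = u + v := by
        by_contra hcon
        exact hg ⟨hcyc, hne, hcon⟩
      obtain ⟨u, v, hcu, hcv, hu0, hv0, hsc, hsum⟩ := hex
      have habs : ∀ c, |y c| = |u c| + |v c| := fun c => by
        rw [hsum]; exact abs_add_of_sign _ _ (hsc c)
      have hyl : ∑ c, |y c| = (∑ c, |u c|) + ∑ c, |v c| := by
        rw [← Finset.sum_add_distrib]; exact Finset.sum_congr rfl fun c _ => habs c
      have hu1 := one_le_l1 u hu0
      have hv1 := one_le_l1 v hv0
      push_cast at hm
      obtain ⟨N₁, g₁, hN₁, hg₁, hs₁, ha₁⟩ := ih u (by linarith) hcu hu0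
      obtain ⟨N₂, g₂, hN₂, hg₂, hs₂, ha₂⟩ := ih v (by linarith) hcv hv0
      refine ⟨N₁ + N₂, Fin.addCases g₁ g₂, by omega, ?_, fun c => ?_, fun c => ?_⟩
      · intro k
        refine Fin.addCases (fun i => ?_) (fun i => ?_) k
        · simpa only [Fin.addCases_left] using hg₁ i
        · simpa only [Fin.addCases_right] using hg₂ i
      · rw [Fin.sum_univ_add]
        simp only [Fin.addCases_left, Fin.addCases_right]
        rw [hs₁, hs₂, hsum]; rfl
      · rw [Fin.sum_univ_add]
        simp only [Fin.addCases_left, Fin.addCases_right]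
        rw [ha₁, ha₂, habs]

lemma exists_kernel_vec {ι : Type*} [Fintype ι] [DecidableEq ι] (d : ℕ) (v : ι → Fin d → ℚ)
    (F : Finset ι) (hF : d + 2 ≤ F.card) :
    ∃ w : ι → ℚ, (∀ i ∉ F, w i = 0) ∧ (∃ i ∈ F, w i ≠ 0) ∧ (∑ i ∈ F, w i = 0) ∧
      ∀ a, ∑ i ∈ F, w i * v i a = 0 := by
  classical
  let φ : ({x // x ∈ F} → ℚ) →ₗ[ℚ] (Fin d → ℚ) × ℚ :=
    { toFun := fun x => (fun a => ∑ i : {x // x ∈ F}, x i * v i a, ∑ i : {x // x ∈ F}, x i)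
      map_add' := by
        intro x y
        ext a
        · simp [add_mul, Finset.sum_add_distrib]
        · simp [Finset.sum_add_distrib]
      map_smul' := by
        intro c x
        ext a
        · simp [Finset.mul_sum, mul_assoc]
        · simp [Finset.mul_sum] }
  have hnotinj : ¬ Function.Injective φ := by
    intro hinj
    have h1 := LinearMap.finrank_le_finrank_of_injective hinj
    rw [Module.finrank_pi] at h1
    simp only [Fintype.card_coe] at h1
    have h2 : Module.finrank ℚ ((Fin d → ℚ) × ℚ) = d + 1 := by
      simp [Module.finrank_prod, Module.finrank_pi]
    omega
  rw [← LinearMap.ker_eq_bot] at hnotinj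
  obtain ⟨x, hxker, hx0⟩ := (Submodule.ne_bot_iff _).1 hnotinj
  refine ⟨fun i => if h : i ∈ F then x ⟨i, h⟩ else 0, fun i hi => dif_neg hi, ?_, ?_, ?_⟩
  · have : ∃ j : {x // x ∈ F}, x j ≠ 0 := by
      by_contra hall; push_neg at hall
      exact hx0 (funext hall)
    obtain ⟨⟨j, hj⟩, hxj⟩ := this
    exact ⟨j, hj, by simpa [dif_pos hj] using hxj⟩
  · have := congrArg Prod.snd hxker
    simp only [φ, LinearMap.coe_mk, AddHom.coe_mk] at this ⊢
    rw [← Finset.sum_attach F]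
    simpa using this
  · intro a
    have := congrArg (fun z => z.1 a) hxker
    simp only [φ, LinearMap.coe_mk, AddHom.coe_mk] at this ⊢
    rw [← Finset.sum_attach F (fun i => (if h : i ∈ F then x ⟨i,h⟩ else 0) * v i a)]
    simpa using this

lemma exists_zero_coord {ι : Type*} [Fintype ι] [DecidableEq ι] (d : ℕ) (v : ι → Fin d → ℚ)
    (T : Finset ι) (hT : d + 1 ≤ T.card) (c : ℚ) (hc : c = (T.card : ℚ) - 1 - d) :
    ∀ (m : ℕ) (mu : ι → ℚ),
      (T.filter fun i => ¬(mu i = 0 ∨ mu i = 1)).card ≤ m →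
      (∀ i ∈ T, 0 ≤ mu i ∧ mu i ≤ 1) → (∑ i ∈ T, mu i = c) →
      (∀ a, ∑ i ∈ T, mu i * v i a = 0) →
      ∃ mu' : ι → ℚ, (∀ i ∈ T, 0 ≤ mu' i ∧ mu' i ≤ 1) ∧ (∑ i ∈ T, mu' i = c) ∧
        (∀ a, ∑ i ∈ T, mu' i * v i a = 0) ∧ ∃ i ∈ T, mu' i = 0 := by
  classical
  have small : ∀ mu : ι → ℚ,
      (T.filter fun i => ¬(mu i = 0 ∨ mu i = 1)).card ≤ d + 1 →
      (∀ i ∈ T, 0 ≤ mu i ∧ mu i ≤ 1) → (∑ i ∈ T, mu i = c) →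
      ∃ i ∈ T, mu i = 0 := by
    intro mu hF hbd hsum
    by_contra hno
    push_neg at hno
    set F := T.filter fun i => ¬(mu i = 0 ∨ mu i = 1) with hFdef
    set O := T.filter fun i => mu i = 1 with hOdef
    have hdisj : Disjoint F O := by
      rw [Finset.disjoint_left]
      intro i hiF hiO
      rw [hFdef, Finset.mem_filter] at hiF
      rw [hOdef, Finset.mem_filter] at hiO
      exact hiF.2 (Or.inr hiO.2)
    have hunion : F ∪ O = T := by
      apply Finset.Subset.antisymm
      · exact Finset.union_subset (Finset.filter_subset _ _) (Finset.filter_subset _ _)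
      · intro i hi
        rcases eq_or_ne (mu i) 1 with h1 | h1
        · exact Finset.mem_union_right _ (Finset.mem_filter.2 ⟨hi, h1⟩)
        · refine Finset.mem_union_left _ (Finset.mem_filter.2 ⟨hi, ?_⟩)
          rintro (h0 | h0)
          · exact hno i hi h0
          · exact h1 h0
    have hcard : F.card + O.card = T.card := by
      rw [← Finset.card_union_of_disjoint hdisj, hunion]
    -- O.card ≤ c
    have hOsum : (O.card : ℚ) = ∑ i ∈ O, mu i := by
      rw [Finset.card_eq_sum_ones, Nat.cast_sum]
      refine Finset.sum_congr rfl fun i hi => ?_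
      rw [hOdef, Finset.mem_filter] at hi
      simp [hi.2]
    have hOle : (O.card : ℚ) ≤ c := by
      rw [hOsum, ← hsum]
      refine Finset.sum_le_sum_of_subset_of_nonneg (Finset.filter_subset _ _) ?_
      intro i hi _
      exact (hbd i hi).1
    -- mu positive on F
    have hFpos : ∀ i ∈ F, 0 < mu i := by
      intro i hi
      rw [hFdef, Finset.mem_filter] at hi
      rcases lt_or_eq_of_le (hbd i hi.1).1 with h | h
      · exact h
      · exact absurd h.symm (fun h0 => hi.2 (Or.inl h0))
    -- F.card ≥ d + 1, combined with hF : F.card = d+1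
    have hFcard : d + 1 ≤ F.card := by
      have h1 : (O.card : ℚ) ≤ (T.card : ℚ) - 1 - d := by rw [← hc]; exact hOle
      have h2 : O.card + d + 1 ≤ T.card := by
        have h3 : ((O.card + d + 1 : ℕ) : ℚ) ≤ ((T.card : ℕ) : ℚ) := by push_cast; linarith
        exact_mod_cast h3
      omega
    have hFeq : F.card = d + 1 := le_antisymm hF hFcard
    have hOeq : (O.card : ℚ) = (T.card : ℚ) - 1 - d := by
      have : O.card = T.card - (d+1) := by omega
      rw [this]
      have : d + 1 ≤ T.card := hT
      push_cast [Nat.cast_sub this]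
      ring
    have hsplit : ∑ i ∈ T, mu i = (∑ i ∈ F, mu i) + ∑ i ∈ O, mu i := by
      rw [← hunion, Finset.sum_union hdisj]
    have hFsum0 : ∑ i ∈ F, mu i = 0 := by
      rw [hsum, ← hOsum, hOeq, hc] at hsplit
      linarith
    have hFne : F.Nonempty := Finset.card_pos.1 (by omega)
    have : 0 < ∑ i ∈ F, mu i := Finset.sum_pos hFpos hFne
    rw [hFsum0] at this
    exact lt_irrefl 0 this
  intro m
  induction m with
  | zero =>
    intro mu hm hbd hsum hv
    exact ⟨mu, hbd, hsum, hv, small mu (le_trans hm (by omega)) hbd hsum⟩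
  | succ m ih =>
    intro mu hm hbd hsum hv
    set F := T.filter fun i => ¬(mu i = 0 ∨ mu i = 1) with hFdef
    by_cases hFsmall : F.card ≤ d + 1
    · exact ⟨mu, hbd, hsum, hv, small mu hFsmall hbd hsum⟩
    · have hF2 : d + 2 ≤ F.card := by omega
      have hFsubT : F ⊆ T := Finset.filter_subset _ _
      have hmuF : ∀ i ∈ F, 0 < mu i ∧ mu i < 1 := by
        intro i hi
        rw [hFdef, Finset.mem_filter] at hi
        push_neg at hi
        obtain ⟨hiT, h0, h1⟩ := hi
        exact ⟨lt_of_le_of_ne (hbd i hiT).1 (Ne.symm h0), lt_of_le_of_ne (hbd i hiT).2 h1⟩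
      obtain ⟨w, hwoff, ⟨j, hjF, hjne⟩, hwsum, hwv⟩ := exists_kernel_vec d v F hF2
      -- a positive coordinate of w exists
      have hpos : ∃ i ∈ F, 0 < w i := by
        by_contra hnp
        push_neg at hnp
        rcases lt_or_gt_of_ne hjne with hneg | hposj
        · have hsum' : ∑ i ∈ F.erase j, w i = - w j := by
            have := Finset.add_sum_erase F w hjF
            linarith
          have : ∑ i ∈ F.erase j, w i ≤ 0 :=
            Finset.sum_nonpos fun i hi => hnp i (Finset.mem_of_mem_erase hi)
          linarith
        · exact absurd hposj (not_lt.2 (hnp j hjF))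
      clear hpos
      set Fnz := F.filter (fun i => w i ≠ 0) with hFnzdef
      have hFnzne : Fnz.Nonempty := ⟨j, Finset.mem_filter.2 ⟨hjF, hjne⟩⟩
      set ratio : ι → ℚ := fun i => if 0 < w i then (1 - mu i) / w i else mu i / (-w i)
        with hratiodef
      obtain ⟨i₀, hi₀, hmin⟩ := Finset.exists_min_image Fnz ratio hFnzne
      have hi₀F : i₀ ∈ F := (Finset.mem_filter.1 hi₀).1
      have hi₀ne : w i₀ ≠ 0 := (Finset.mem_filter.1 hi₀).2
      set t := ratio i₀ with htdef
      have hratio_pos : ∀ i ∈ Fnz, 0 < ratio i := by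
        intro i hi
        obtain ⟨hiF, hine⟩ := Finset.mem_filter.1 hi
        obtain ⟨h0, h1⟩ := hmuF i hiF
        rw [hratiodef]
        rcases lt_or_gt_of_ne hine with hneg | hpos'
        · simp only [if_neg (not_lt.2 hneg.le)]
          exact div_pos h0 (by linarith)
        · simp only [if_pos hpos']
          exact div_pos (by linarith) hpos'
      have ht0 : 0 < t := hratio_pos i₀ hi₀
      set mu' : ι → ℚ := fun i => mu i + t * w i with hmu'def
      have hoff : ∀ i, i ∉ F → mu' i = mu i := fun i hi => by
        rw [hmu'def]; simp [hwoff i hi]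
      have hbd' : ∀ i ∈ T, 0 ≤ mu' i ∧ mu' i ≤ 1 := by
        intro i hiT
        by_cases hiF : i ∈ F
        · obtain ⟨h0, h1⟩ := hmuF i hiF
          by_cases hwz : w i = 0
          · rw [hmu'def]; simp only [hwz, mul_zero, add_zero]
            exact ⟨h0.le, h1.le⟩
          · have hiFnz : i ∈ Fnz := Finset.mem_filter.2 ⟨hiF, hwz⟩
            have htle := hmin i hiFnz
            rcases lt_or_gt_of_ne hwz with hneg | hposw
            · have hr : ratio i = mu i / (-w i) := by
                rw [hratiodef]; simp only [if_neg (not_lt.2 hneg.le)]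
              have h2 : (0:ℚ) < -w i := by linarith
              have hkey : t * (-w i) ≤ mu i := by
                calc t * (-w i) ≤ (mu i / (-w i)) * (-w i) := by
                      rw [hr] at htle
                      exact mul_le_mul_of_nonneg_right htle h2.le
                  _ = mu i := div_mul_cancel₀ _ (ne_of_gt h2)
              constructor
              · rw [hmu'def]; simp only; nlinarith
              · rw [hmu'def]; simp only
                nlinarith [mul_pos ht0 h2]
            · have hr : ratio i = (1 - mu i) / w i := by
                rw [hratiodef]; simp only [if_pos hposw]
              have hkey : t * w i ≤ 1 - mu i := by
                calc t * w i ≤ ((1 - mu i) / w i) * w i := by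
                      rw [hr] at htle
                      exact mul_le_mul_of_nonneg_right htle hposw.le
                  _ = 1 - mu i := div_mul_cancel₀ _ (ne_of_gt hposw)
              constructor
              · rw [hmu'def]; simp only; nlinarith [mul_pos ht0 hposw]
              · rw [hmu'def]; simp only; linarith
        · rw [hoff i hiF]; exact hbd i hiT
      have hTw : ∑ i ∈ T, w i = 0 := by
        rw [← Finset.sum_subset hFsubT (fun i _ hiF => hwoff i hiF)]
        exact hwsum
      have hsum' : ∑ i ∈ T, mu' i = c := by
        have : ∑ i ∈ T, mu' i = (∑ i ∈ T, mu i) + t * ∑ i ∈ T, w i := by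
          rw [Finset.mul_sum, ← Finset.sum_add_distrib]
        rw [this, hTw, hsum]; ring
      have hv' : ∀ a, ∑ i ∈ T, mu' i * v i a = 0 := by
        intro a
        have hTwv : ∑ i ∈ T, w i * v i a = 0 := by
          rw [← Finset.sum_subset hFsubT (fun i _ hiF => by rw [hwoff i hiF, zero_mul])]
          exact hwv a
        have : ∑ i ∈ T, mu' i * v i a
            = (∑ i ∈ T, mu i * v i a) + t * ∑ i ∈ T, w i * v i a := by
          rw [Finset.mul_sum, ← Finset.sum_add_distrib]
          refine Finset.sum_congr rfl fun i _ => ?_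
          rw [hmu'def]; ring
        rw [this, hTwv, hv a]; ring
      have hi₀fixed : mu' i₀ = 0 ∨ mu' i₀ = 1 := by
        rcases lt_or_gt_of_ne hi₀ne with hneg | hposw
        · left
          rw [hmu'def]; simp only
          rw [htdef, hratiodef]; simp only [if_neg (not_lt.2 hneg.le)]
          rw [div_neg, neg_mul, div_mul_cancel₀ _ hi₀ne]
          ring
        · right
          rw [hmu'def]; simp only
          rw [htdef, hratiodef]; simp only [if_pos hposw]
          rw [div_mul_cancel₀ _ hi₀ne]
          ring
      have hsubset : (T.filter fun i => ¬(mu' i = 0 ∨ mu' i = 1)) ⊆ F.erase i₀ := by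
        intro i hi
        obtain ⟨hiT, hfrac⟩ := Finset.mem_filter.1 hi
        have hiF : i ∈ F := by
          by_contra hniF
          rw [hoff i hniF] at hfrac
          exact hniF (Finset.mem_filter.2 ⟨hiT, hfrac⟩)
        refine Finset.mem_erase.2 ⟨fun heq => ?_, hiF⟩
        rw [heq] at hfrac
        exact hfrac hi₀fixed
      have hcard' : (T.filter fun i => ¬(mu' i = 0 ∨ mu' i = 1)).card ≤ m := by
        have h1 := Finset.card_le_card hsubset
        have h2 := Finset.card_erase_of_mem hi₀F
        omega
      exact ih mu' hcard' hbd' hsum' hv'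

def Feas {ι : Type*} (d : ℕ) (v : ι → Fin d → ℤ) (T : Finset ι) : Prop :=
  d ≤ T.card → ∃ lam : ι → ℚ, (∀ i ∈ T, 0 ≤ lam i ∧ lam i ≤ 1) ∧
    (∑ i ∈ T, lam i = (T.card : ℚ) - d) ∧ (∀ a, ∑ i ∈ T, lam i * (v i a : ℚ) = 0)

lemma descend {ι : Type*} [Fintype ι] [DecidableEq ι] (d : ℕ) (M : ℤ)
    (hM : 0 ≤ (d : ℤ) * M) (v : ι → Fin d → ℤ) (hbd : ∀ k a, |v k a| ≤ M) :
    ∀ (j : ℕ) (T : Finset ι), T.card = j → Feas d v T →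
    ∃ S : ℕ → Finset ι, (∀ k, S k ⊆ S (k + 1)) ∧ (∀ k ≤ j, (S k).card = k) ∧
      (∀ k, j ≤ k → S k = T) ∧ (∀ k a, |∑ i ∈ S k, v i a| ≤ (d : ℤ) * M) := by
  classical
  intro j
  induction j with
  | zero =>
    intro T hcard _
    rw [Finset.card_eq_zero] at hcard
    subst hcard
    exact ⟨fun _ => ∅, fun k => Finset.Subset.refl _, fun k hk => by simp; omega,
      fun k _ => rfl, fun k a => by simpa using hM⟩
  | succ j ih =>
    intro T hcard hfeas
    -- produce the bound at T and an element to remove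
    have hmain : (∀ a, |∑ i ∈ T, v i a| ≤ (d:ℤ) * M) ∧ ∃ i₀ ∈ T, Feas d v (T.erase i₀) := by
      rcases le_or_gt (d : ℕ) j with hdj | hjd
      · -- case B : d ≤ j
        obtain ⟨lam, hlbd, hlsum, hlv⟩ := hfeas (by omega)
        constructor
        · intro a
          have hq : |(∑ i ∈ T, v i a : ℚ)| ≤ (d : ℚ) * M := by
            have e2 : (∑ i ∈ T, ((v i a : ℤ) : ℚ)) = ∑ i ∈ T, (1 - lam i) * (v i a : ℚ) := by
              have h3 : ∑ i ∈ T, (1 - lam i) * ((v i a : ℤ) : ℚ)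
                  = ∑ i ∈ T, ((v i a : ℤ) : ℚ) - ∑ i ∈ T, lam i * (v i a : ℚ) := by
                rw [← Finset.sum_sub_distrib]
                exact Finset.sum_congr rfl fun i _ => by ring
              rw [h3, hlv a, sub_zero]
            have habs : |∑ i ∈ T, (1 - lam i) * ((v i a : ℤ) : ℚ)|
                ≤ ∑ i ∈ T, (1 - lam i) * (M : ℚ) := by
              refine le_trans (Finset.abs_sum_le_sum_abs _ _) (Finset.sum_le_sum ?_)
              intro i hi
              rw [abs_mul, abs_of_nonneg (by linarith [(hlbd i hi).2])]
              refine mul_le_mul_of_nonneg_left ?_ (by linarith [(hlbd i hi).2])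
              exact_mod_cast (by exact_mod_cast hbd i a : |((v i a : ℤ):ℚ)| ≤ (M:ℚ))
            have hcoef : ∑ i ∈ T, (1 - lam i) * (M : ℚ) = (d : ℚ) * M := by
              rw [← Finset.sum_mul]
              have : ∑ i ∈ T, (1 - lam i) = (d : ℚ) := by
                rw [Finset.sum_sub_distrib, hlsum, Finset.sum_const, nsmul_eq_mul, mul_one]
                ring
              rw [this]
            rw [e2]
            exact habs.trans (le_of_eq hcoef)
          exact_mod_cast hq
        · -- removal via zero coordinate
          have hTc : d + 1 ≤ T.card := by omega
          set c : ℚ := (T.card : ℚ) - 1 - d with hcdef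
          have hden : (0:ℚ) < (T.card : ℚ) - d := by
            have : (d:ℚ) + 1 ≤ (T.card : ℚ) := by exact_mod_cast hTc
            linarith
          set f : ℚ := c / ((T.card : ℚ) - d) with hfdef
          have hf0 : 0 ≤ f := by
            apply div_nonneg _ hden.le
            rw [hcdef]
            have : (d:ℚ) + 1 ≤ (T.card : ℚ) := by exact_mod_cast hTc
            linarith
          have hf1 : f ≤ 1 := by
            rw [hfdef, div_le_one hden, hcdef]; linarith
          have hmu₀ := exists_zero_coord d (fun i a => (v i a : ℚ)) T hTc c hcdef
            (T.filter fun i => ¬(f * lam i = 0 ∨ f * lam i = 1)).card (fun i => f * lam i)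
            le_rfl
            (fun i hi => ⟨mul_nonneg hf0 (hlbd i hi).1,
              mul_le_one₀ hf1 (hlbd i hi).1 (hlbd i hi).2⟩)
            (by rw [← Finset.mul_sum, hlsum, hfdef, hcdef, div_mul_cancel₀]
                exact ne_of_gt hden)
            (fun a => by
              have h4 : ∑ i ∈ T, f * lam i * ((v i a : ℤ) : ℚ)
                  = f * ∑ i ∈ T, lam i * ((v i a : ℤ) : ℚ) := by
                rw [Finset.mul_sum]
                exact Finset.sum_congr rfl fun i _ => by ring
              rw [h4, hlv a, mul_zero])
          obtain ⟨mu', hmbd, hmsum, hmv, i₀, hi₀T, hmz⟩ := hmu₀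
          refine ⟨i₀, hi₀T, fun _ => ⟨mu', fun i hi => hmbd i (Finset.mem_of_mem_erase hi),
            ?_, fun a => ?_⟩⟩
          · rw [Finset.sum_erase_eq_sub hi₀T, hmsum, hmz, Finset.card_erase_of_mem hi₀T,
              hcdef, hcard]
            push_cast [show (1:ℕ) ≤ j + 1 by omega]
            ring
          · rw [Finset.sum_erase_eq_sub hi₀T, hmv a, hmz, zero_mul, sub_zero]
      · -- case A : j + 1 ≤ d
        have hMpos : 0 ≤ M := by
          by_contra hMneg
          push_neg at hMneg
          have : (0:ℤ) < d := by exact_mod_cast (by omega : 0 < d)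
          nlinarith
        constructor
        · intro a
          calc |∑ i ∈ T, v i a| ≤ ∑ i ∈ T, |v i a| := Finset.abs_sum_le_sum_abs _ _
            _ ≤ ∑ _i ∈ T, M := Finset.sum_le_sum fun i _ => hbd i a
            _ = (T.card : ℤ) * M := by rw [Finset.sum_const, nsmul_eq_mul]
            _ ≤ (d : ℤ) * M := by
              apply mul_le_mul_of_nonneg_right _ hMpos
              exact_mod_cast (by omega : T.card ≤ d)
        · have hne : T.Nonempty := Finset.card_pos.1 (by omega)
          obtain ⟨i₀, hi₀⟩ := hne
          exact ⟨i₀, hi₀, fun hd => absurd hd (by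
            rw [Finset.card_erase_of_mem hi₀, hcard]; omega)⟩
    obtain ⟨hboundT, i₀, hi₀T, hfeas'⟩ := hmain
    obtain ⟨S', hchain', hcard', heq', hbound'⟩ :=
      ih (T.erase i₀) (by rw [Finset.card_erase_of_mem hi₀T, hcard]; omega) hfeas'
    refine ⟨fun k => if k ≤ j then S' k else T, fun k => ?_, fun k hk => ?_, fun k hk => ?_,
      fun k a => ?_⟩
    · by_cases h1 : k ≤ j
      · by_cases h2 : k + 1 ≤ j
        · simpa [h1, h2] using hchain' k
        · have hkj : k = j := by omega
          simp only [if_pos h1, if_neg h2]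
          rw [hkj, heq' j le_rfl]
          exact Finset.erase_subset _ _
      · simp [h1, show ¬ (k+1 ≤ j) by omega]
    · by_cases h1 : k ≤ j
      · simpa [h1] using hcard' k h1
      · have : k = j + 1 := by omega
        simp [h1, this, hcard]
    · have h1 : ¬ (k ≤ j) := by omega
      simp [h1]
    · by_cases h1 : k ≤ j
      · simpa [h1] using hbound' k a
      · simpa [h1] using hboundT a

lemma steinitz_chain {ι : Type*} [Fintype ι] [DecidableEq ι] (d : ℕ) (M : ℤ)
    (hM : 0 ≤ (d : ℤ) * M) (v : ι → Fin d → ℤ) (hbd : ∀ k a, |v k a| ≤ M)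
    (hsum : ∀ a, ∑ i, v i a = 0) :
    ∃ S : ℕ → Finset ι, (∀ k, S k ⊆ S (k + 1)) ∧
      (∀ k ≤ Fintype.card ι, (S k).card = k) ∧
      (∀ k, Fintype.card ι ≤ k → S k = Finset.univ) ∧
      (∀ k a, |∑ i ∈ S k, v i a| ≤ (d : ℤ) * M) := by
  classical
  have hfeas : Feas d v (Finset.univ : Finset ι) := by
    intro hd
    rcases Nat.eq_zero_or_pos (Fintype.card ι) with h0 | hpos
    · refine ⟨0, by simp, ?_, by simp⟩
      rw [Finset.card_univ, h0]
      have : d = 0 := by rw [Finset.card_univ, h0] at hd; omega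
      simp [this]
    · set N := Fintype.card ι with hN
      have hNq : (0:ℚ) < (N : ℚ) := by exact_mod_cast hpos
      refine ⟨fun _ => ((N:ℚ) - d) / N, fun i _ => ⟨?_, ?_⟩, ?_, fun a => ?_⟩
      · apply div_nonneg _ hNq.le
        have : (d:ℚ) ≤ (N:ℚ) := by
          rw [Finset.card_univ] at hd; exact_mod_cast hd
        linarith
      · rw [div_le_one hNq]
        have : (0:ℚ) ≤ (d:ℚ) := by positivity
        linarith
      · rw [Finset.sum_const, nsmul_eq_mul, Finset.card_univ, ← hN]
        field_simp
      · rw [← Finset.mul_sum]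
        have h5 : ∑ i : ι, ((v i a : ℤ) : ℚ) = 0 := by exact_mod_cast hsum a
        rw [h5, mul_zero]
  obtain ⟨S, h1, h2, h3, h4⟩ := descend d M hM v hbd (Fintype.card ι)
    (Finset.univ : Finset ι) Finset.card_univ hfeas
  exact ⟨S, h1, h2, h3, h4⟩

lemma card_le_of_no_zero_subsum {ι : Type*} [Fintype ι] [DecidableEq ι] (d : ℕ) (M : ℤ)
    (hM : 0 ≤ (d : ℤ) * M) (v : ι → Fin d → ℤ) (hbd : ∀ k a, |v k a| ≤ M)
    (hsum : ∀ a, ∑ i, v i a = 0)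
    (hnz : ∀ T : Finset ι, T.Nonempty → T ≠ Finset.univ → ¬ (∀ a, ∑ i ∈ T, v i a = 0)) :
    (Fintype.card ι : ℤ) ≤ (2 * (d : ℤ) * M + 1) ^ d := by
  classical
  by_contra hlt
  push_neg at hlt
  obtain ⟨S, hchain, hcard, huniv, hbound⟩ := steinitz_chain d M hM v hbd hsum
  set N := Fintype.card ι with hN
  set Box : Finset (Fin d → ℤ) := Fintype.piFinset fun _ => Finset.Icc (-((d:ℤ)*M)) ((d:ℤ)*M)
    with hBox
  have hBoxcard : Box.card = ((2*(d:ℤ)*M + 1).toNat) ^ d := by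
    rw [hBox, Fintype.card_piFinset]
    have : ∀ _a : Fin d, (Finset.Icc (-((d:ℤ)*M)) ((d:ℤ)*M)).card = (2*(d:ℤ)*M + 1).toNat := by
      intro a
      rw [Int.card_Icc]
      congr 1
      ring
    rw [Finset.prod_congr rfl (fun a _ => this a), Finset.prod_const, Finset.card_univ,
      Fintype.card_fin]
  have hmaps : ∀ k ∈ Finset.Icc 1 N, (fun a => ∑ i ∈ S k, v i a) ∈ Box := by
    intro k _
    rw [hBox, Fintype.mem_piFinset]
    intro a
    rw [Finset.mem_Icc, ← abs_le]
    exact hbound k a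
  have hcardlt : Box.card < (Finset.Icc 1 N).card := by
    rw [hBoxcard, Nat.card_Icc]
    have h2 : ((2*(d:ℤ)*M + 1).toNat : ℤ) = 2*(d:ℤ)*M + 1 := by
      rw [Int.toNat_of_nonneg]; nlinarith
    have h3 : ((2*(d:ℤ)*M + 1).toNat) ^ d < N := by
      have h4 : (((2*(d:ℤ)*M + 1).toNat ^ d : ℕ) : ℤ) < (N : ℤ) := by
        push_cast [h2]
        exact hlt
      exact_mod_cast h4
    omega
  obtain ⟨a, ha, b, hb, hab, hfeq⟩ :=
    Finset.exists_ne_map_eq_of_card_lt_of_maps_to hcardlt hmaps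
  have hm : Monotone S := monotone_nat_of_le_succ (fun k => Finset.le_iff_subset.2 (hchain k))
  have key : ∀ p q : ℕ, p ∈ Finset.Icc 1 N → q ∈ Finset.Icc 1 N → p < q →
      (∀ x, ∑ i ∈ S p, v i x = ∑ i ∈ S q, v i x) → False := by
    intro p q hp hq hpq heq
    rw [Finset.mem_Icc] at hp hq
    have hsab : S p ⊆ S q := Finset.le_iff_subset.1 (hm hpq.le)
    have hca : (S p).card = p := hcard p (by omega)
    have hcb : (S q).card = q := hcard q (by omega)
    have hTcard : (S q \ S p).card = q - p := by
      rw [Finset.card_sdiff_of_subset hsab, hca, hcb]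
    have hTne : (S q \ S p).Nonempty := Finset.card_pos.1 (by omega)
    have hTnu : (S q \ S p) ≠ Finset.univ := by
      intro hTu
      obtain ⟨x, hx⟩ : (S p).Nonempty := Finset.card_pos.1 (by omega)
      have hxT : x ∈ S q \ S p := hTu ▸ Finset.mem_univ x
      exact (Finset.mem_sdiff.1 hxT).2 hx
    exact hnz _ hTne hTnu (fun x => by
      rw [Finset.sum_sdiff_eq_sub hsab, heq x, sub_self])
  rcases lt_or_gt_of_ne hab with h | h
  · exact key a b ha hb h (fun x => congrFun hfeq x)
  · exact key b a hb ha h (fun x => (congrFun hfeq x).symm)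

section main
variable {n r : ℕ} {t s : Fin n → ℕ}

def liftBrick (t : Fin n → ℕ) (i : Fin n) (g : Fin (t i) → ℤ) : (Σ i', Fin (t i')) → ℤ :=
  fun c => if h : c.1 = i then g (h ▸ c.2) else 0

lemma liftBrick_same (i : Fin n) (g : Fin (t i) → ℤ) (j : Fin (t i)) :
    liftBrick t i g ⟨i, j⟩ = g j := by
  simp [liftBrick]

lemma liftBrick_ne (i : Fin n) (g : Fin (t i) → ℤ) (c : Σ i', Fin (t i'))
    (h : c.1 ≠ i) : liftBrick t i g c = 0 := dif_neg h

lemma mulVec_inl (A : ∀ i, Matrix (Fin r) (Fin (t i)) ℤ)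
    (B : ∀ i, Matrix (Fin (s i)) (Fin (t i)) ℤ)
    (z : (Σ i, Fin (t i)) → ℤ) (a : Fin r) :
    (blockNFoldMatrix A B).mulVec z (Sum.inl a) = ∑ c : (Σ i, Fin (t i)), A c.1 a c.2 * z c := by
  simp only [Matrix.mulVec, dotProduct, blockNFoldMatrix, Matrix.of_apply]

lemma mulVec_inr (A : ∀ i, Matrix (Fin r) (Fin (t i)) ℤ)
    (B : ∀ i, Matrix (Fin (s i)) (Fin (t i)) ℤ)
    (z : (Σ i, Fin (t i)) → ℤ) (i : Fin n) (q : Fin (s i)) :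
    (blockNFoldMatrix A B).mulVec z (Sum.inr ⟨i, q⟩)
      = ∑ j : Fin (t i), B i q j * z ⟨i, j⟩ := by
  simp only [Matrix.mulVec, dotProduct, blockNFoldMatrix, Matrix.of_apply]
  rw [← Finset.univ_sigma_univ, Finset.sum_sigma]
  rw [Finset.sum_eq_single_of_mem i (Finset.mem_univ i)]
  · simp
  · intro i' _ hne
    apply Finset.sum_eq_zero
    intro j _
    rw [dif_neg (fun h => hne h.symm)]
    ring

/-- If all entries of the `A⁽ⁱ⁾` have absolute value at most `Δ` and every
Graver basis element of each `B⁽ⁱ⁾` has `ℓ₁`-norm at most `L`, then every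
Graver basis element `y` of the block matrix `𝒜` satisfies
`‖y‖₁ ≤ L · (2rΔL + 1)^r`. -/
theorem block_nfold_graver_l1_bound (n r : ℕ) (t s : Fin n → ℕ) (Δ L : ℤ)
    (A : ∀ i, Matrix (Fin r) (Fin (t i)) ℤ)
    (B : ∀ i, Matrix (Fin (s i)) (Fin (t i)) ℤ)
    (hA : ∀ i a j, |A i a j| ≤ Δ)
    (hB : ∀ i (g : Fin (t i) → ℤ), InGraverBasis (B i) g → ∑ j, |g j| ≤ L)
    (y : (Σ i, Fin (t i)) → ℤ) (hy : InGraverBasis (blockNFoldMatrix A B) y) :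
    ∑ p, |y p| ≤ L * (2 * (r : ℤ) * Δ * L + 1) ^ r := by
  classical
  obtain ⟨hcyc, hne, hnd⟩ := hy
  obtain ⟨c₀, hc₀⟩ : ∃ c, y c ≠ 0 := by
    by_contra h; push_neg at h; exact hne (funext h)
  -- decompose each brick
  have hdec : ∀ i : Fin n, ∃ (N : ℕ) (g : Fin N → (Fin (t i) → ℤ)),
      (∀ k, InGraverBasis (B i) (g k)) ∧ (∀ j, ∑ k, g k j = y ⟨i, j⟩) ∧
      (∀ j, ∑ k, |g k j| = |y ⟨i, j⟩|) := by
    intro i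
    have hbrickcyc : IsCycle (B i) (fun j => y ⟨i, j⟩) := by
      funext q
      have h0 := congrFun hcyc (Sum.inr ⟨i, q⟩)
      rw [mulVec_inr A B y i q] at h0
      show (B i).mulVec (fun j => y ⟨i, j⟩) q = 0
      simpa [Matrix.mulVec, dotProduct] using h0
    by_cases hz : (fun j => y ⟨i, j⟩) = (0 : Fin (t i) → ℤ)
    · exact ⟨0, Fin.elim0, fun k => k.elim0,
        fun j => by simp [congrFun hz j], fun j => by simp [congrFun hz j]⟩
    · obtain ⟨N, g, _, hgr, hs, ha⟩ := conformal_decomp (B i)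
        (∑ j, |y ⟨i, j⟩|).toNat (fun j => y ⟨i, j⟩) (Int.self_le_toNat _) hbrickcyc hz
      exact ⟨N, g, hgr, fun j => hs j, fun j => ha j⟩
  choose Np gp hgr hsumg habsg using hdec
  set pieces : (Σ i : Fin n, Fin (Np i)) → ((Σ i, Fin (t i)) → ℤ) :=
    fun k => liftBrick t k.1 (gp k.1 k.2) with hpieces
  -- P1: conformal sum to y
  have P1 : ∀ c : (Σ i, Fin (t i)), ∑ k : (Σ i : Fin n, Fin (Np i)), pieces k c = y c := by
    rintro ⟨ci, cj⟩
    rw [← Finset.univ_sigma_univ, Finset.sum_sigma]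
    rw [Finset.sum_eq_single_of_mem ci (Finset.mem_univ ci)]
    · rw [← hsumg ci cj]
      exact Finset.sum_congr rfl fun m _ => liftBrick_same ci (gp ci m) cj
    · intro i' _ hne'
      exact Finset.sum_eq_zero fun m _ => liftBrick_ne i' (gp i' m) ⟨ci, cj⟩ hne'.symm
  have P2 : ∀ c : (Σ i, Fin (t i)), ∑ k : (Σ i : Fin n, Fin (Np i)), |pieces k c| = |y c| := by
    rintro ⟨ci, cj⟩
    rw [← Finset.univ_sigma_univ, Finset.sum_sigma]
    rw [Finset.sum_eq_single_of_mem ci (Finset.mem_univ ci)]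
    · rw [← habsg ci cj]
      exact Finset.sum_congr rfl fun m _ => congrArg abs (liftBrick_same ci (gp ci m) cj)
    · intro i' _ hne'
      exact Finset.sum_eq_zero fun m _ =>
        abs_eq_zero.2 (liftBrick_ne i' (gp i' m) ⟨ci, cj⟩ hne'.symm)
  -- P3: each piece is killed by the B-rows
  have P3 : ∀ (k : Σ i : Fin n, Fin (Np i)) (i : Fin n) (q : Fin (s i)),
      ∑ j : Fin (t i), B i q j * pieces k ⟨i, j⟩ = 0 := by
    rintro ⟨ki, m⟩ i q
    by_cases hki : ki = i
    · subst hki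
      have hcycg := (hgr ki m).1
      have h0 := congrFun hcycg q
      simp only [Matrix.mulVec, dotProduct, Pi.zero_apply] at h0
      rw [← h0]
      exact Finset.sum_congr rfl fun j _ =>
        congrArg (fun x => B ki q j * x) (liftBrick_same ki (gp ki m) j)
    · refine Finset.sum_eq_zero fun j _ => ?_
      have h0 : pieces ⟨ki, m⟩ ⟨i, j⟩ = 0 :=
        liftBrick_ne ki (gp ki m) ⟨i, j⟩ (fun h => hki h.symm)
      rw [h0, mul_zero]
  -- P4: ℓ₁ norm of each piece at most L
  have P4 : ∀ k : (Σ i : Fin n, Fin (Np i)), ∑ c : (Σ i, Fin (t i)), |pieces k c| ≤ L := by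
    rintro ⟨ki, m⟩
    have : ∑ c : (Σ i, Fin (t i)), |pieces ⟨ki, m⟩ c| = ∑ j, |gp ki m j| := by
      rw [← Finset.univ_sigma_univ, Finset.sum_sigma]
      rw [Finset.sum_eq_single_of_mem ki (Finset.mem_univ ki)]
      · exact Finset.sum_congr rfl fun j _ => congrArg abs (liftBrick_same ki (gp ki m) j)
      · intro i' _ hne'
        exact Finset.sum_eq_zero fun j _ =>
          abs_eq_zero.2 (liftBrick_ne ki (gp ki m) ⟨i', j⟩ hne')
    rw [this]
    exact hB ki (gp ki m) (hgr ki m)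
  -- P5: pieces are nonzero
  have P5 : ∀ k : (Σ i : Fin n, Fin (Np i)), ∃ c, pieces k c ≠ 0 := by
    rintro ⟨ki, m⟩
    have hg0 : gp ki m ≠ 0 := (hgr ki m).2.1
    obtain ⟨j, hj⟩ : ∃ j, gp ki m j ≠ 0 := by
      by_contra h; push_neg at h; exact hg0 (funext h)
    have he : pieces ⟨ki, m⟩ ⟨ki, j⟩ = gp ki m j := liftBrick_same ki (gp ki m) j
    exact ⟨⟨ki, j⟩, by rw [he]; exact hj⟩
  -- the A-row contributions
  set vA : (Σ i : Fin n, Fin (Np i)) → Fin r → ℤ :=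
    fun k a => ∑ c : (Σ i, Fin (t i)), A c.1 a c.2 * pieces k c with hvA
  have hsumvA : ∀ a, ∑ k, vA k a = 0 := by
    intro a
    rw [hvA]
    rw [Finset.sum_comm]
    have : ∑ c : (Σ i, Fin (t i)), ∑ k : (Σ i : Fin n, Fin (Np i)), A c.1 a c.2 * pieces k c
        = ∑ c : (Σ i, Fin (t i)), A c.1 a c.2 * y c := by
      refine Finset.sum_congr rfl fun c _ => ?_
      rw [← Finset.mul_sum, P1 c]
    rw [this, ← mulVec_inl A B y a, hcyc]
    rfl
  -- nonemptiness and sign bounds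
  have hne_ι : Nonempty (Σ i : Fin n, Fin (Np i)) := by
    by_contra hempty
    rw [not_nonempty_iff] at hempty
    have := P2 c₀
    rw [Finset.univ_eq_empty, Finset.sum_empty] at this
    exact hc₀ (abs_eq_zero.1 this.symm)
  obtain ⟨k₀⟩ := hne_ι
  have hL0 : 0 ≤ L := le_trans (Finset.sum_nonneg fun c _ => abs_nonneg _) (P4 k₀)
  have hrM : 0 ≤ (r : ℤ) * (Δ * L) := by
    rcases Nat.eq_zero_or_pos r with h0 | hpos
    · simp [h0]
    · have hΔ0 : 0 ≤ Δ := le_trans (abs_nonneg _) (hA c₀.1 ⟨0, hpos⟩ c₀.2)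
      positivity
  have hbdvA : ∀ k a, |vA k a| ≤ Δ * L := by
    intro k a
    have hΔ0 : 0 ≤ Δ := le_trans (abs_nonneg _) (hA c₀.1 a c₀.2)
    calc |vA k a| ≤ ∑ c : (Σ i, Fin (t i)), |A c.1 a c.2 * pieces k c| :=
          Finset.abs_sum_le_sum_abs _ _
      _ ≤ ∑ c : (Σ i, Fin (t i)), Δ * |pieces k c| := by
          refine Finset.sum_le_sum fun c _ => ?_
          rw [abs_mul]
          exact mul_le_mul_of_nonneg_right (hA c.1 a c.2) (abs_nonneg _)
      _ = Δ * ∑ c : (Σ i, Fin (t i)), |pieces k c| := (Finset.mul_sum _ _ _).symm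
      _ ≤ Δ * L := mul_le_mul_of_nonneg_left (P4 k) hΔ0
  -- no proper nonempty subset has zero A-sum
  have hnzs : ∀ T : Finset (Σ i : Fin n, Fin (Np i)), T.Nonempty → T ≠ Finset.univ →
      ¬ (∀ a, ∑ k ∈ T, vA k a = 0) := by
    intro T hTne hTnu hzero
    set u : (Σ i, Fin (t i)) → ℤ := fun c => ∑ k ∈ T, pieces k c with hu
    set w : (Σ i, Fin (t i)) → ℤ := fun c => ∑ k ∈ Tᶜ, pieces k c with hw
    have huw : ∀ c, u c + w c = y c := by
      intro c
      rw [hu, hw, Finset.sum_add_sum_compl, P1 c]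
    -- cycles
    have hcycle : ∀ (T' : Finset (Σ i : Fin n, Fin (Np i))),
        (∀ a, ∑ k ∈ T', vA k a = 0) →
        IsCycle (blockNFoldMatrix A B) (fun c => ∑ k ∈ T', pieces k c) := by
      intro T' hz'
      funext row
      rcases row with a | iq
      · rw [mulVec_inl]
        have : ∑ c : (Σ i, Fin (t i)), A c.1 a c.2 * ∑ k ∈ T', pieces k c
            = ∑ k ∈ T', vA k a := by
          rw [hvA, Finset.sum_comm]
          exact Finset.sum_congr rfl fun c _ => Finset.mul_sum _ _ _
        rw [this, hz' a]
        rfl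
      · obtain ⟨i, q⟩ := iq
        rw [mulVec_inr]
        have : ∑ j : Fin (t i), B i q j * ∑ k ∈ T', pieces k ⟨i, j⟩
            = ∑ k ∈ T', ∑ j : Fin (t i), B i q j * pieces k ⟨i, j⟩ := by
          rw [Finset.sum_comm]
          exact Finset.sum_congr rfl fun j _ => Finset.mul_sum _ _ _
        rw [this, Finset.sum_eq_zero fun k _ => P3 k i q]
        rfl
    have hcu : IsCycle (blockNFoldMatrix A B) u := hcycle T hzero
    have hcw : IsCycle (blockNFoldMatrix A B) w := by
      have hzc : ∀ a, ∑ k ∈ Tᶜ, vA k a = 0 := by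
        intro a
        have := Finset.sum_add_sum_compl T (fun k => vA k a)
        rw [hsumvA a, hzero a] at this
        linarith
      exact hcycle Tᶜ hzc
    -- abs equalities
    have habs_eq : ∀ c, |u c| = ∑ k ∈ T, |pieces k c| ∧ |w c| = ∑ k ∈ Tᶜ, |pieces k c|
        ∧ |u c + w c| = |u c| + |w c| := by
      intro c
      have h1 : |u c| ≤ ∑ k ∈ T, |pieces k c| := Finset.abs_sum_le_sum_abs _ _
      have h2 : |w c| ≤ ∑ k ∈ Tᶜ, |pieces k c| := Finset.abs_sum_le_sum_abs _ _
      have h3 : (∑ k ∈ T, |pieces k c|) + ∑ k ∈ Tᶜ, |pieces k c| = |y c| := by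
        rw [Finset.sum_add_sum_compl, P2 c]
      have h4 : |u c + w c| = |y c| := by rw [huw c]
      have h5 : |u c| + |w c| ≤ |y c| := by rw [← h3]; exact add_le_add h1 h2
      have h6 : |y c| ≤ |u c| + |w c| := h4 ▸ abs_add_le _ _
      exact ⟨by linarith, by linarith, by linarith⟩
    have hsc : SignCompat u w := fun c => sign_of_abs_add _ _ (habs_eq c).2.2
    -- nonzeroness
    have hnz_of : ∀ (T' : Finset (Σ i : Fin n, Fin (Np i))), T'.Nonempty →
        (∀ c, |(fun c => ∑ k ∈ T', pieces k c) c| = ∑ k ∈ T', |pieces k c|) →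
        (fun c => ∑ k ∈ T', pieces k c) ≠ 0 := by
      intro T' hT'ne habs hzfun
      obtain ⟨k₁, hk₁⟩ := hT'ne
      obtain ⟨c₁, hc₁⟩ := P5 k₁
      have h7 : (0:ℤ) < ∑ k ∈ T', |pieces k c₁| := by
        refine lt_of_lt_of_le (abs_pos.2 hc₁) ?_
        exact Finset.single_le_sum (f := fun k => |pieces k c₁|) (fun k _ => abs_nonneg _) hk₁
      have h8 : |∑ k ∈ T', pieces k c₁| = ∑ k ∈ T', |pieces k c₁| := habs c₁
      have h9 : ∑ k ∈ T', pieces k c₁ = 0 := congrFun hzfun c₁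
      rw [h9] at h8
      simp at h8
      linarith
    have hu0 : u ≠ 0 := hnz_of T hTne (fun c => (habs_eq c).1)
    have hTcne : (Tᶜ : Finset (Σ i : Fin n, Fin (Np i))).Nonempty := by
      by_contra hemp
      rw [Finset.not_nonempty_iff_eq_empty] at hemp
      apply hTnu
      apply Finset.eq_univ_of_forall
      intro x
      by_contra hx
      have hxc : x ∈ Tᶜ := Finset.mem_compl.2 hx
      rw [hemp] at hxc
      exact absurd hxc (Finset.notMem_empty x)
    have hw0 : w ≠ 0 := hnz_of Tᶜ hTcne (fun c => (habs_eq c).2.1)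
    exact hnd ⟨u, w, hcu, hcw, hu0, hw0, hsc, funext fun c => (huw c).symm⟩
  -- counting
  have hcount := card_le_of_no_zero_subsum r (Δ * L) hrM vA hbdvA hsumvA hnzs
  -- final computation
  have hfinal : ∑ p, |y p| ≤ (Fintype.card (Σ i : Fin n, Fin (Np i)) : ℤ) * L := by
    calc ∑ p, |y p| = ∑ p, ∑ k : (Σ i : Fin n, Fin (Np i)), |pieces k p| :=
          Finset.sum_congr rfl fun p _ => (P2 p).symm
      _ = ∑ k : (Σ i : Fin n, Fin (Np i)), ∑ p, |pieces k p| := Finset.sum_comm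
      _ ≤ ∑ _k : (Σ i : Fin n, Fin (Np i)), L := Finset.sum_le_sum fun k _ => P4 k
      _ = (Fintype.card (Σ i : Fin n, Fin (Np i)) : ℤ) * L := by
          rw [Finset.sum_const, nsmul_eq_mul, Finset.card_univ]
  calc ∑ p, |y p| ≤ (Fintype.card (Σ i : Fin n, Fin (Np i)) : ℤ) * L := hfinal
    _ ≤ (2 * (r : ℤ) * (Δ * L) + 1) ^ r * L := mul_le_mul_of_nonneg_right hcount hL0
    _ = L * (2 * (r : ℤ) * Δ * L + 1) ^ r := by ring
end main
end
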